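/- arXiv:1908.04689 — 5 statements merged into one kernel-verified Lean document; each statement's English description precedes it below -/
import Mathlib

section
/- The feasibility set {(x, f) : T̄_i/x_i + C_{ij}D_{ij}/f_{ij} ≤ T for all i,j; Σ_i x_i = 1; Σ_{i,j} f_{ij} ≤ F; x_i, f_{ij} > 0} is nonempty if and only if Σ_{i=1}^N T̄_i ≤ T (with strict inequality needed if any D_{ij} > 0) and (Σ_i √(T̄_i Σ_j C_{ij}D_{ij}))²/(T(T − Σ_i T̄_i)) + Σ_{i,j} C_{ij}D_{ij}/T ≤ F. -/
open Finset

/-!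
Each constraint `T̄ᵢ / xᵢ + c / f ≤ T` (with `c, f > 0`) says exactly that `T̄ᵢ < T xᵢ` and
`f ≥ c xᵢ / (T xᵢ - T̄ᵢ)`, so the capacities can be eliminated by taking them minimal. In terms
of the slacks `uᵢ = T xᵢ - T̄ᵢ`, which are positive and sum to `T - Σ T̄ᵢ`, the total minimal
capacity is `(Σᵢ T̄ᵢ Sᵢ / uᵢ + Σᵢ Sᵢ) / T` with `Sᵢ = Σⱼ Cᵢⱼ Dᵢⱼ`. By Cauchy–Schwarz in Titu's
form, the least value of `Σᵢ T̄ᵢ Sᵢ / uᵢ` over such slacks is `(Σᵢ √(T̄ᵢ Sᵢ))² / (T - Σ T̄ᵢ)`,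
attained at `uᵢ` proportional to `√(T̄ᵢ Sᵢ)`.
-/

theorem div_add_div_le_iff_lt_and_le {b c x f T : ℝ} (hx : 0 < x) (hf : 0 < f) (hc : 0 < c) :
    b / x + c / f ≤ T ↔ b < T * x ∧ c * x / (T * x - b) ≤ f := by
  have hslack : T - b / x = (T * x - b) / x := by
    rw [sub_div, mul_div_cancel_right₀ _ hx.ne']
  constructor
  · intro h
    have hbx : b < T * x := by
      rw [← div_lt_iff₀ hx]
      linarith [div_pos hc hf]
    have hcf : c / f ≤ (T * x - b) / x := by rw [← hslack]; linarith
    rw [div_le_div_iff₀ hf hx] at hcf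
    exact ⟨hbx, (div_le_iff₀ (sub_pos.2 hbx)).2 (by linarith)⟩
  · rintro ⟨hbx, hcf⟩
    rw [div_le_iff₀ (sub_pos.2 hbx)] at hcf
    have : c / f ≤ (T * x - b) / x := by rw [div_le_div_iff₀ hf hx]; linarith
    linarith

theorem exists_pos_capacities_iff {ι : Type*} [Fintype ι] {κ : ι → Type*}
    [∀ i, Fintype (κ i)] [∀ i, Nonempty (κ i)] {c : (i : ι) → κ i → ℝ} (hc : ∀ i j, 0 < c i j)
    {b x : ι → ℝ} (hx : ∀ i, 0 < x i) (T F : ℝ) :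
    (∃ f : (i : ι) → κ i → ℝ, (∀ i j, 0 < f i j) ∧ (∀ i j, b i / x i + c i j / f i j ≤ T) ∧
        ∑ i, ∑ j, f i j ≤ F) ↔
      (∀ i, b i < T * x i) ∧ ∑ i, (∑ j, c i j) * x i / (T * x i - b i) ≤ F := by
  constructor
  · rintro ⟨f, hf, hfeas, hF⟩
    have h i j := (div_add_div_le_iff_lt_and_le (hx i) (hf i j) (hc i j)).1 (hfeas i j)
    refine ⟨fun i => (h i (Classical.arbitrary _)).1, hF.trans' (sum_le_sum fun i _ => ?_)⟩
    rw [sum_mul, sum_div]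
    exact sum_le_sum fun j _ => (h i j).2
  · rintro ⟨hbx, hF⟩
    have hpos i j : 0 < c i j * x i / (T * x i - b i) :=
      div_pos (mul_pos (hc i j) (hx i)) (sub_pos.2 (hbx i))
    refine ⟨fun i j => c i j * x i / (T * x i - b i), hpos, fun i j => ?_, ?_⟩
    · exact (div_add_div_le_iff_lt_and_le (hx i) (hpos i j) (hc i j)).2 ⟨hbx i, le_rfl⟩
    · simpa only [sum_mul, sum_div] using hF

theorem sum_mul_div_sub_eq {ι : Type*} [Fintype ι] {b s x : ι → ℝ} {T : ℝ} (hT : T ≠ 0)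
    (hx : ∀ i, T * x i - b i ≠ 0) :
    ∑ i, s i * x i / (T * x i - b i) = (∑ i, b i * s i / (T * x i - b i) + ∑ i, s i) / T := by
  rw [← sum_add_distrib, sum_div]
  refine sum_congr rfl fun i _ => ?_
  rw [eq_div_iff hT, div_mul_eq_mul_div, div_add' _ _ _ (hx i)]
  congr 1
  ring

theorem exists_shares_iff_exists_slacks {ι : Type*} [Fintype ι] {b s : ι → ℝ}
    (hb : ∀ i, 0 ≤ b i) {T : ℝ} (hT : 0 < T) (F : ℝ) :
    (∃ x : ι → ℝ, (∀ i, 0 < x i) ∧ ∑ i, x i = 1 ∧ (∀ i, b i < T * x i) ∧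
        ∑ i, s i * x i / (T * x i - b i) ≤ F) ↔
      ∃ u : ι → ℝ, (∀ i, 0 < u i) ∧ ∑ i, u i = T - ∑ i, b i ∧
        ∑ i, b i * s i / u i ≤ T * F - ∑ i, s i := by
  constructor
  · rintro ⟨x, -, hx, hbx, hF⟩
    refine ⟨fun i => T * x i - b i, fun i => sub_pos.2 (hbx i), ?_, ?_⟩
    · rw [sum_sub_distrib, ← mul_sum, hx, mul_one]
    · rw [sum_mul_div_sub_eq hT.ne' fun i => (sub_pos.2 (hbx i)).ne', div_le_iff₀ hT] at hF
      linarith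
  · rintro ⟨u, hu, hsum, hF⟩
    have hslack i : T * ((b i + u i) / T) - b i = u i := by
      rw [mul_div_cancel₀ _ hT.ne', add_sub_cancel_left]
    refine ⟨fun i => (b i + u i) / T, fun i => div_pos (by linarith [hb i, hu i]) hT, ?_,
      fun i => by linarith [hslack i, hu i], ?_⟩
    · rw [← sum_div, sum_add_distrib, hsum, add_sub_cancel, div_self hT.ne']
    · rw [sum_mul_div_sub_eq hT.ne' fun i => (hslack i).symm ▸ (hu i).ne', div_le_iff₀ hT]
      simp only [hslack]
      linarith

theorem sum_sq_div_mul_div_sum {ι K : Type*} [Field K] (s : Finset ι) (a : ι → K) (Δ : K) :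
    ∑ i ∈ s, a i ^ 2 / (Δ * a i / ∑ j ∈ s, a j) = (∑ i ∈ s, a i) ^ 2 / Δ := by
  rw [sq (∑ i ∈ s, a i), mul_div_assoc, sum_mul]
  refine sum_congr rfl fun i _ => ?_
  rcases eq_or_ne (a i) 0 with h | h
  · simp [h]
  · rw [div_div_eq_mul_div, sq, mul_assoc, mul_comm Δ, mul_div_mul_left _ _ h, mul_div_assoc]

theorem exists_sum_eq_sum_div_le_iff {ι : Type*} {s : Finset ι} (hs : s.Nonempty) {w : ι → ℝ}
    (hw : ∀ i ∈ s, 0 < w i) (Δ K : ℝ) :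
    (∃ u : ι → ℝ, (∀ i ∈ s, 0 < u i) ∧ ∑ i ∈ s, u i = Δ ∧ ∑ i ∈ s, w i / u i ≤ K) ↔
      0 < Δ ∧ (∑ i ∈ s, √(w i)) ^ 2 / Δ ≤ K := by
  have hsq : ∀ u : ι → ℝ, ∑ i ∈ s, √(w i) ^ 2 / u i = ∑ i ∈ s, w i / u i := fun u =>
    sum_congr rfl fun i hi => by rw [Real.sq_sqrt (hw i hi).le]
  constructor
  · rintro ⟨u, hu, rfl, hK⟩
    refine ⟨sum_pos hu hs, ?_⟩
    calc (∑ i ∈ s, √(w i)) ^ 2 / ∑ i ∈ s, u i ≤ ∑ i ∈ s, √(w i) ^ 2 / u i :=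
          sq_sum_div_le_sum_sq_div s _ hu
      _ ≤ K := (hsq u).trans_le hK
  · rintro ⟨hΔ, hK⟩
    have ha i (hi : i ∈ s) : 0 < √(w i) := Real.sqrt_pos.2 (hw i hi)
    have hA : 0 < ∑ i ∈ s, √(w i) := sum_pos ha hs
    refine ⟨fun i => Δ * √(w i) / ∑ j ∈ s, √(w j),
      fun i hi => div_pos (mul_pos hΔ (ha i hi)) hA, ?_, ?_⟩
    · rw [← sum_div, ← mul_sum, mul_div_assoc, div_self hA.ne', mul_one]
    · rwa [← hsq, sum_sq_div_mul_div_sum]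

theorem stmt_7_general (N : ℕ) (hN : 0 < N) (M : Fin N → ℕ) (hM : ∀ i, 0 < M i)
    (C D : (i : Fin N) → Fin (M i) → ℝ) (Tb : Fin N → ℝ) (T F : ℝ)
    (hC : ∀ i j, 0 < C i j) (hD : ∀ i j, 0 < D i j) (hTb : ∀ i, 0 < Tb i)
    (hT : 0 < T) :
    (∃ (x : Fin N → ℝ) (f : (i : Fin N) → Fin (M i) → ℝ),
        (∀ i, 0 < x i) ∧ (∀ i j, 0 < f i j) ∧
        (∀ i j, Tb i / x i + C i j * D i j / f i j ≤ T) ∧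
        (∑ i, x i = 1) ∧ (∑ i, ∑ j, f i j ≤ F)) ↔
      ((∑ i, Tb i < T) ∧
        (∑ i, Real.sqrt (Tb i * ∑ j, C i j * D i j)) ^ 2 / (T * (T - ∑ i, Tb i)) +
          (∑ i, ∑ j, C i j * D i j) / T ≤ F) := by
  have : NeZero N := ⟨hN.ne'⟩
  have (i : Fin N) : Nonempty (Fin (M i)) := ⟨⟨0, hM i⟩⟩
  have hCD i j : 0 < C i j * D i j := mul_pos (hC i j) (hD i j)
  have hw : ∀ i ∈ univ, 0 < Tb i * ∑ j, C i j * D i j := fun i _ =>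
    mul_pos (hTb i) (sum_pos (fun j _ => hCD i j) univ_nonempty)
  calc _ ↔ ∃ x : Fin N → ℝ, (∀ i, 0 < x i) ∧ ∑ i, x i = 1 ∧ (∀ i, Tb i < T * x i) ∧
          ∑ i, (∑ j, C i j * D i j) * x i / (T * x i - Tb i) ≤ F := by
        refine exists_congr fun x => ⟨?_, ?_⟩
        · rintro ⟨f, hx, hf, hfeas, hx1, hF⟩
          exact ⟨hx, hx1, (exists_pos_capacities_iff hCD hx T F).1 ⟨f, hf, hfeas, hF⟩⟩
        · rintro ⟨hx, hx1, h⟩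
          obtain ⟨f, hf, hfeas, hF⟩ := (exists_pos_capacities_iff hCD hx T F).2 h
          exact ⟨f, hx, hf, hfeas, hx1, hF⟩
    _ ↔ ∃ u : Fin N → ℝ, (∀ i, 0 < u i) ∧ ∑ i, u i = T - ∑ i, Tb i ∧
          ∑ i, Tb i * (∑ j, C i j * D i j) / u i ≤ T * F - ∑ i, ∑ j, C i j * D i j :=
        exists_shares_iff_exists_slacks (fun i => (hTb i).le) hT F
    _ ↔ 0 < T - ∑ i, Tb i ∧ (∑ i, √(Tb i * ∑ j, C i j * D i j)) ^ 2 / (T - ∑ i, Tb i) ≤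
          T * F - ∑ i, ∑ j, C i j * D i j := by
        simpa only [mem_univ, forall_const] using
          exists_sum_eq_sum_div_le_iff univ_nonempty hw (T - ∑ i, Tb i) _
    _ ↔ _ := by
        rw [sub_pos, div_mul_eq_div_div_swap, ← add_div, div_le_iff₀ hT, le_sub_iff_add_le,
          mul_comm F]

/-- Feasibility of {(x,f) : T̄_i/x_i + C_{ij}D_{ij}/f_{ij} ≤ T, Σ x_i = 1,
Σ f_{ij} ≤ F, x_i, f_{ij} > 0}: nonempty iff Σ T̄_i < T (strict since all
D_{ij} > 0) and (Σ_i √(T̄_i Σ_j C_{ij}D_{ij}))²/(T(T − Σ T̄_i)) +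
Σ_{ij} C_{ij}D_{ij}/T ≤ F. -/
theorem stmt_7 (N : ℕ) (hN : 0 < N) (M : Fin N → ℕ) (hM : ∀ i, 0 < M i)
    (C D : (i : Fin N) → Fin (M i) → ℝ) (Tb : Fin N → ℝ) (T F : ℝ)
    (hC : ∀ i j, 0 < C i j) (hD : ∀ i j, 0 < D i j) (hTb : ∀ i, 0 < Tb i)
    (hT : 0 < T) (hF : 0 < F) :
    (∃ (x : Fin N → ℝ) (f : (i : Fin N) → Fin (M i) → ℝ),
        (∀ i, 0 < x i) ∧ (∀ i j, 0 < f i j) ∧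
        (∀ i j, Tb i / x i + C i j * D i j / f i j ≤ T) ∧
        (∑ i, x i = 1) ∧ (∑ i, ∑ j, f i j ≤ F)) ↔
      ((∑ i, Tb i < T) ∧
        (∑ i, Real.sqrt (Tb i * ∑ j, C i j * D i j)) ^ 2 / (T * (T - ∑ i, Tb i)) +
          (∑ i, ∑ j, C i j * D i j) / T ≤ F) :=
  stmt_7_general N hN M hM C D Tb T F hC hD hTb hT
end

section
/- The power p_j(s) = (1/h_j)·(2^{D_j/(Bs)} − 1)·[Σ_{l=j+1}^{m} 2^{(Σ_{k=j+1}^{l-1}D_k)/(Bs)}·(2^{D_l/(Bs)} − 1)·σ²B + σ²B] is a strictly decreasing function of s > 0 whenever D_j > 0. -/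
open Finset

lemma aux_rpow_lt {a : ℝ} (ha : 0 < a) {x y : ℝ} (hxy : x < y) :
    (2 : ℝ) ^ x < (2 : ℝ) ^ y :=
  Real.rpow_lt_rpow_left_iff one_lt_two |>.2 hxy

lemma aux_rpow_le {x y : ℝ} (hxy : x ≤ y) :
    (2 : ℝ) ^ x ≤ (2 : ℝ) ^ y :=
  Real.rpow_le_rpow_left_iff one_lt_two |>.2 hxy

/-- The required power
p_j(s) = (1/h_j)(2^{D_j/(Bs)} − 1)[Σ_{l=j+1}^m 2^{(Σ_{k=j+1}^{l-1}D_k)/(Bs)}(2^{D_l/(Bs)} − 1)σ²B + σ²B]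
is strictly decreasing in s > 0 when D_j > 0. -/
theorem stmt_10 (B σ2 h : ℝ) (hB : 0 < B) (hσ : 0 < σ2) (hh : 0 < h)
    (m j : ℕ) (hj : j ≤ m) (D : ℕ → ℝ) (hD : ∀ k, 0 ≤ D k) (hDj : 0 < D j) :
    StrictAntiOn (fun s : ℝ =>
      (1 / h) * ((2 : ℝ) ^ (D j / (B * s)) - 1) *
        ((∑ l ∈ Finset.Icc (j + 1) m,
            (2 : ℝ) ^ ((∑ k ∈ Finset.Icc (j + 1) (l - 1), D k) / (B * s)) *
              ((2 : ℝ) ^ (D l / (B * s)) - 1) * σ2 * B) + σ2 * B))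
      (Set.Ioi (0 : ℝ)) := by
  intro s hs t ht hst
  simp only [Set.mem_Ioi] at hs ht
  have hBs : 0 < B * s := mul_pos hB hs
  have hBt : 0 < B * t := mul_pos hB ht
  have hinv : (B * t)⁻¹ < (B * s)⁻¹ := by
    apply inv_strictAnti₀ hBs
    exact mul_lt_mul_of_pos_left hst hB
  -- key: a / (B*t) ≤ a / (B*s) for a ≥ 0, strict for a > 0
  have hle : ∀ a : ℝ, 0 ≤ a → a / (B * t) ≤ a / (B * s) := by
    intro a ha
    rw [div_eq_mul_inv, div_eq_mul_inv]
    exact mul_le_mul_of_nonneg_left hinv.le ha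
  have hlt : D j / (B * t) < D j / (B * s) := by
    rw [div_eq_mul_inv, div_eq_mul_inv]
    exact mul_lt_mul_of_pos_left hinv hDj
  -- positivity facts
  have hApos : ∀ u : ℝ, 0 < u → (0:ℝ) < (2 : ℝ) ^ (D j / (B * u)) - 1 := by
    intro u hu
    have : (1:ℝ) < (2:ℝ) ^ (D j / (B * u)) := by
      have := Real.one_lt_rpow_iff_of_pos (x := 2) (by norm_num) (y := D j / (B * u))
      exact this.2 (Or.inl ⟨by norm_num, div_pos hDj (mul_pos hB hu)⟩)
    linarith
  have hAlt : (2 : ℝ) ^ (D j / (B * t)) - 1 < (2 : ℝ) ^ (D j / (B * s)) - 1 := by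
    have := aux_rpow_lt hDj hlt
    linarith
  -- sums
  set St := ∑ l ∈ Finset.Icc (j + 1) m,
      (2 : ℝ) ^ ((∑ k ∈ Finset.Icc (j + 1) (l - 1), D k) / (B * t)) *
        ((2 : ℝ) ^ (D l / (B * t)) - 1) * σ2 * B with hSt
  set Ss := ∑ l ∈ Finset.Icc (j + 1) m,
      (2 : ℝ) ^ ((∑ k ∈ Finset.Icc (j + 1) (l - 1), D k) / (B * s)) *
        ((2 : ℝ) ^ (D l / (B * s)) - 1) * σ2 * B with hSs
  have htermnn : ∀ (u : ℝ), 0 < u → ∀ l,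
      0 ≤ (2 : ℝ) ^ ((∑ k ∈ Finset.Icc (j + 1) (l - 1), D k) / (B * u)) *
        ((2 : ℝ) ^ (D l / (B * u)) - 1) * σ2 * B := by
    intro u hu l
    have h1 : (0:ℝ) ≤ (2 : ℝ) ^ ((∑ k ∈ Finset.Icc (j + 1) (l - 1), D k) / (B * u)) :=
      (Real.rpow_pos_of_pos (by norm_num) _).le
    have h2 : (0:ℝ) ≤ (2 : ℝ) ^ (D l / (B * u)) - 1 := by
      have : (1:ℝ) ≤ (2:ℝ) ^ (D l / (B * u)) :=
        Real.one_le_rpow (by norm_num) (div_nonneg (hD l) (mul_pos hB hu).le)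
      linarith
    exact mul_nonneg (mul_nonneg (mul_nonneg h1 h2) hσ.le) hB.le
  have hStnn : 0 ≤ St := Finset.sum_nonneg fun l _ => htermnn t ht l
  have hSle : St ≤ Ss := by
    apply Finset.sum_le_sum
    intro l _
    have h1 := aux_rpow_le (hle (∑ k ∈ Finset.Icc (j + 1) (l - 1), D k)
      (Finset.sum_nonneg fun k _ => hD k))
    have h2 := aux_rpow_le (hle (D l) (hD l))
    have hp1 : (0:ℝ) ≤ (2 : ℝ) ^ ((∑ k ∈ Finset.Icc (j + 1) (l - 1), D k) / (B * t)) :=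
      (Real.rpow_pos_of_pos (by norm_num) _).le
    have hp2 : (0:ℝ) ≤ (2 : ℝ) ^ (D l / (B * t)) - 1 := by
      have : (1:ℝ) ≤ (2:ℝ) ^ (D l / (B * t)) := by
        apply Real.one_le_rpow (by norm_num) (div_nonneg (hD l) hBt.le)
      linarith
    have hp3 : (0:ℝ) ≤ (2 : ℝ) ^ ((∑ k ∈ Finset.Icc (j + 1) (l - 1), D k) / (B * s)) :=
      (Real.rpow_pos_of_pos (by norm_num) _).le
    have key : (2 : ℝ) ^ ((∑ k ∈ Finset.Icc (j + 1) (l - 1), D k) / (B * t)) *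
        ((2 : ℝ) ^ (D l / (B * t)) - 1) ≤
        (2 : ℝ) ^ ((∑ k ∈ Finset.Icc (j + 1) (l - 1), D k) / (B * s)) *
        ((2 : ℝ) ^ (D l / (B * s)) - 1) := by
      apply mul_le_mul h1 (by linarith) hp2 hp3
    have := mul_le_mul_of_nonneg_right (mul_le_mul_of_nonneg_right key hσ.le) hB.le
    linarith
  have hmain : ((2 : ℝ) ^ (D j / (B * t)) - 1) * (St + σ2 * B) <
      ((2 : ℝ) ^ (D j / (B * s)) - 1) * (Ss + σ2 * B) := by
    have hpos : (0:ℝ) < St + σ2 * B := add_pos_of_nonneg_of_pos hStnn (mul_pos hσ hB)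
    have h1 : ((2 : ℝ) ^ (D j / (B * t)) - 1) * (St + σ2 * B) <
        ((2 : ℝ) ^ (D j / (B * s)) - 1) * (St + σ2 * B) :=
      mul_lt_mul_of_pos_right hAlt hpos
    have h2 : ((2 : ℝ) ^ (D j / (B * s)) - 1) * (St + σ2 * B) ≤
        ((2 : ℝ) ^ (D j / (B * s)) - 1) * (Ss + σ2 * B) :=
      mul_le_mul_of_nonneg_left (by linarith) (hApos s hs).le
    linarith
  have hgoal := mul_lt_mul_of_pos_left hmain (show (0:ℝ) < 1 / h by positivity)
  simpa only [hSt, hSs, mul_assoc] using hgoal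
end

section
/- Summing the per-user NOMA rate equations over weaker users yields the aggregate form: if B·τ·log₂(1 + p_j h_j/(σ²B + Σ_{l=j+1}^m p_l h_l)) = d_j for all j = 1,…,m, then B·τ·log₂(1 + (Σ_{l=j}^m p_l h_l)/(σ²B)) = Σ_{l=j}^m d_l for all j. -/
open Finset

/-- Summing the per-user NOMA rate equations over weaker users:
if B·τ·log₂(1 + p_j h_j/(σ²B + Σ_{l=j+1}^m p_l h_l)) = d_j for all j = 1,…,m,
then B·τ·log₂(1 + (Σ_{l=j}^m p_l h_l)/(σ²B)) = Σ_{l=j}^m d_l for all j. -/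
theorem stmt_12 (B σ2 τ : ℝ) (hB : 0 < B) (hσ : 0 < σ2) (hτ : 0 < τ)
    (m : ℕ) (p h d : ℕ → ℝ) (hp : ∀ l, 0 ≤ p l) (hh : ∀ l, 0 < h l)
    (hd : ∀ l, 0 ≤ d l)
    (hrate : ∀ j, 1 ≤ j → j ≤ m →
      B * τ * Real.logb 2
          (1 + p j * h j / (σ2 * B + ∑ l ∈ Finset.Icc (j + 1) m, p l * h l)) = d j) :
    ∀ j, 1 ≤ j → j ≤ m →
      B * τ * Real.logb 2 (1 + (∑ l ∈ Finset.Icc j m, p l * h l) / (σ2 * B)) =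
        ∑ l ∈ Finset.Icc j m, d l := by
  have hσB : 0 < σ2 * B := mul_pos hσ hB
  have hSnn : ∀ a : ℕ, 0 ≤ ∑ l ∈ Finset.Icc a m, p l * h l := fun a =>
    Finset.sum_nonneg fun l _ => mul_nonneg (hp l) (hh l).le
  have hlog : ∀ x : ℝ, 0 ≤ x → ∀ y : ℝ, 0 < y →
      Real.logb 2 (1 + x / y) = Real.logb 2 (y + x) - Real.logb 2 y := by
    intro x hx y hy
    rw [show (1 : ℝ) + x / y = (y + x) / y by field_simp,
      Real.logb_div (by positivity) hy.ne']
  suffices H : ∀ t j, 1 ≤ j → j ≤ m → m - j ≤ t →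
      B * τ * Real.logb 2 (1 + (∑ l ∈ Finset.Icc j m, p l * h l) / (σ2 * B)) =
        ∑ l ∈ Finset.Icc j m, d l by
    intro j h1 h2
    exact H (m - j) j h1 h2 le_rfl
  intro t
  induction t with
  | zero =>
    intro j h1 h2 ht
    have hjm : j = m := le_antisymm h2 (by omega)
    subst hjm
    have := hrate j h1 le_rfl
    rw [Finset.Icc_eq_empty (by omega)] at this
    simp only [Finset.sum_empty, add_zero] at this
    rw [Finset.Icc_self, Finset.sum_singleton, Finset.sum_singleton]
    exact this
  | succ t ih =>
    intro j h1 h2 ht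
    rcases eq_or_lt_of_le h2 with hjm | hjm
    · subst hjm
      have := hrate j h1 le_rfl
      rw [Finset.Icc_eq_empty (by omega)] at this
      simp only [Finset.sum_empty, add_zero] at this
      rw [Finset.Icc_self, Finset.sum_singleton, Finset.sum_singleton]
      exact this
    · have hsplit : Finset.Icc j m = insert j (Finset.Icc (j + 1) m) := by
        ext x; simp only [Finset.mem_Icc, Finset.mem_insert]; omega
      have hjnot : j ∉ Finset.Icc (j + 1) m := by simp
      have hsum : ∑ l ∈ Finset.Icc j m, p l * h l
          = p j * h j + ∑ l ∈ Finset.Icc (j + 1) m, p l * h l := by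
        rw [hsplit, Finset.sum_insert hjnot]
      have hdsum : ∑ l ∈ Finset.Icc j m, d l
          = d j + ∑ l ∈ Finset.Icc (j + 1) m, d l := by
        rw [hsplit, Finset.sum_insert hjnot]
      have hih := ih (j + 1) (by omega) (by omega) (by omega)
      have hr := hrate j h1 h2
      have hpos : 0 < σ2 * B + ∑ l ∈ Finset.Icc (j + 1) m, p l * h l := by
        have := hSnn (j + 1); linarith
      rw [hlog _ (mul_nonneg (hp j) (hh j).le) _ hpos] at hr
      rw [hlog _ (hSnn (j + 1)) _ hσB] at hih
      rw [hlog _ (hSnn j) _ hσB, hsum, hdsum, ← hr, ← hih]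
      ring_nf
end

section
/- Conversely, if B·τ·log₂(1 + (Σ_{l=j}^m p_l h_l)/(σ²B)) = Σ_{l=j}^m d_l holds for all j = 1,…,m (and for j = m+1 trivially with empty sums), then the per-user rates satisfy B·τ·log₂(1 + p_j h_j/(σ²B + Σ_{l=j+1}^m p_l h_l)) = d_j for every j. -/
open Finset

/-- Conversely, if the aggregate equations
B·τ·log₂(1 + (Σ_{l=j}^m p_l h_l)/(σ²B)) = Σ_{l=j}^m d_l hold for all j = 1,…,m
(the case j = m+1 being trivial with empty sums), then the per-user rates
satisfy B·τ·log₂(1 + p_j h_j/(σ²B + Σ_{l=j+1}^m p_l h_l)) = d_j for every j. -/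
theorem stmt_13 (B σ2 τ : ℝ) (hB : 0 < B) (hσ : 0 < σ2) (hτ : 0 < τ)
    (m : ℕ) (p h d : ℕ → ℝ) (hp : ∀ l, 0 ≤ p l) (hh : ∀ l, 0 < h l)
    (hd : ∀ l, 0 ≤ d l)
    (hagg : ∀ j, 1 ≤ j → j ≤ m →
      B * τ * Real.logb 2 (1 + (∑ l ∈ Finset.Icc j m, p l * h l) / (σ2 * B)) =
        ∑ l ∈ Finset.Icc j m, d l) :
    ∀ j, 1 ≤ j → j ≤ m →
      B * τ * Real.logb 2
          (1 + p j * h j / (σ2 * B + ∑ l ∈ Finset.Icc (j + 1) m, p l * h l)) = d j := by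
  intro j hj1 hjm
  set S : ℝ := ∑ l ∈ Finset.Icc (j + 1) m, p l * h l with hSdef
  have hS : 0 ≤ S :=
    Finset.sum_nonneg fun l _ => mul_nonneg (hp l) (hh l).le
  have hσB : 0 < σ2 * B := mul_pos hσ hB
  have hph : 0 ≤ p j * h j := mul_nonneg (hp j) (hh j).le
  have hsplitP : (∑ l ∈ Finset.Icc j m, p l * h l) = p j * h j + S := by
    rw [hSdef, Finset.Icc_add_one_left_eq_Ioc, Finset.Icc_eq_cons_Ioc hjm, Finset.sum_cons]
  have hsplitD : (∑ l ∈ Finset.Icc j m, d l) = d j + ∑ l ∈ Finset.Icc (j + 1) m, d l := by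
    rw [Finset.Icc_add_one_left_eq_Ioc, Finset.Icc_eq_cons_Ioc hjm, Finset.sum_cons]
  have hA2 : B * τ * Real.logb 2 (1 + S / (σ2 * B)) = ∑ l ∈ Finset.Icc (j + 1) m, d l := by
    rcases Nat.lt_or_ge j m with h' | h'
    · exact hagg (j + 1) (by omega) h'
    · have hjm' : j = m := le_antisymm hjm h'
      have : Finset.Icc (j + 1) m = ∅ := Finset.Icc_eq_empty (by omega)
      simp [hSdef, this]
  have key := hagg j hj1 hjm
  rw [hsplitP, hsplitD, ← hA2] at key
  have hY : (0:ℝ) < 1 + (p j * h j + S) / (σ2 * B) := by positivity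
  have hZ : (0:ℝ) < 1 + S / (σ2 * B) := by positivity
  have hrat : 1 + p j * h j / (σ2 * B + S) =
      (1 + (p j * h j + S) / (σ2 * B)) / (1 + S / (σ2 * B)) := by
    have h1 : σ2 * B + S ≠ 0 := by positivity
    have h2 : σ2 * B ≠ 0 := ne_of_gt hσB
    field_simp
    ring
  rw [hrat, Real.logb_div (ne_of_gt hY) (ne_of_gt hZ)]
  linarith [key]
end

section
/- For the problem min ωT + (1−ω)Σ_i Σ_j p_{ij}τ_i subject to τ_i/x_i + C_{ij}d_{ij}/f_{ij} ≤ T, Σ_{i,j} f_{ij} ≤ F, τ_i ≥ T_i, f_{ij} ≥ 0, T ≥ T̄ (with fixed d, x, p), the optimal solution is τ_i* = T_i, f_{ij}* = C_{ij}d_{ij}x_i/(T*·x_i − T_i), and T* = max{T̄, T̃}, where T̃ solves Σ_{i,j} C_{ij}d_{ij}x_i/(T̃x_i − T_i) = F. -/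
/-!
Every feasible point has `T ≥ T̃`: the constraint for link `k` forces
`f_k ≥ C_k d_k x_i / (T x_i − τ_i) ≥ C_k d_k x_i / (T x_i − T_i)`, and if `T < T̃` each of these
bounds strictly exceeds the corresponding term of the equation defining `T̃`, so `Σ f > F`.
Hence `T ≥ max T̄ T̃ = T*`, while `τ ≥ T_i` bounds the second part of the objective. Conversely
`f*` meets every link constraint with equality, and its total is at most `F` because each
term decreases in `T`.
-/

open Finset

section LinkConstraint

variable {c x t τ T f : ℝ}

theorem sub_div_mul_div_sub_mul_eq (hx : x ≠ 0) (hT : T * x - t ≠ 0) :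
    (T - t / x) * (c * x / (T * x - t)) = c := by
  field_simp

theorem mul_le_sub_mul_of_le_sub_div_mul (hx : 0 < x) (hτ : t ≤ τ) (hf : 0 ≤ f)
    (h : c ≤ (T - τ / x) * f) : c * x ≤ (T * x - t) * f := by
  have hdiv : t / x ≤ τ / x := div_le_div_of_nonneg_right hτ hx.le
  have hc : c ≤ (T - t / x) * f := h.trans (by gcongr)
  calc c * x ≤ (T - t / x) * f * x := mul_le_mul_of_nonneg_right hc hx.le
    _ = (T * x - t) * f := by field_simp

theorem div_lt_of_le_mul_of_lt {a y b T' : ℝ} (ha : 0 < a) (hy : 0 < y) (hf : 0 ≤ f)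
    (hT' : 0 < T' * y - b) (hTT' : T < T') (h : a ≤ (T * y - b) * f) :
    a / (T' * y - b) < f := by
  rw [div_lt_iff₀ hT']
  have hfpos : 0 < f := by
    rcases hf.lt_or_eq with hf | hf
    · exact hf
    · rw [← hf, mul_zero] at h; linarith
  nlinarith [mul_pos (mul_pos (sub_pos.2 hTT') hy) hfpos]

end LinkConstraint

section Allocation

variable {ι : Type*} [Fintype ι] {a y b f : ι → ℝ} {T T' F : ℝ}

theorem sum_div_sub_antitone (ha : ∀ k, 0 ≤ a k) (hy : ∀ k, 0 < y k)
    (hT : ∀ k, 0 < T * y k - b k) (hTT' : T ≤ T') :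
    ∑ k, a k / (T' * y k - b k) ≤ ∑ k, a k / (T * y k - b k) :=
  sum_le_sum fun k _ =>
    div_le_div_of_nonneg_left (ha k) (hT k) (by nlinarith [hy k, hT k])

theorem le_of_sum_le_of_le_sub_mul (ha : ∀ k, 0 < a k) (hy : ∀ k, 0 < y k)
    (hT' : ∀ k, 0 < T' * y k - b k) (hF : 0 < F) (hT'eq : ∑ k, a k / (T' * y k - b k) = F)
    (hf : ∀ k, 0 ≤ f k) (hsum : ∑ k, f k ≤ F) (hcon : ∀ k, a k ≤ (T * y k - b k) * f k) :
    T' ≤ T := by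
  by_contra! hTT'
  rcases isEmpty_or_nonempty ι with hι | hι
  · rw [univ_eq_empty, sum_empty] at hT'eq
    linarith
  have hlt : ∑ k, a k / (T' * y k - b k) < ∑ k, f k :=
    sum_lt_sum_of_nonempty univ_nonempty fun k _ =>
      div_lt_of_le_mul_of_lt (ha k) (hy k) (hf k) (hT' k) hTT' (hcon k)
  linarith

end Allocation

theorem stmt_15_general (N : ℕ) (M : Fin N → ℕ) (ω : ℝ) (hω0 : 0 < ω) (hω1 : ω ≤ 1)
    (p C d : (Σ i : Fin N, Fin (M i)) → ℝ) (x Tlow : Fin N → ℝ)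
    (Tbar F Tt : ℝ) (hp : ∀ k, 0 ≤ p k) (hC : ∀ k, 0 < C k) (hd : ∀ k, 0 < d k)
    (hx : ∀ i, 0 < x i) (hF : 0 < F)
    (hTt : ∀ i, Tlow i < Tt * x i)
    (hTteq : ∑ k : Σ i : Fin N, Fin (M i),
      C k * d k * x k.1 / (Tt * x k.1 - Tlow k.1) = F) :
    let Tstar : ℝ := max Tbar Tt
    let fstar : (Σ i : Fin N, Fin (M i)) → ℝ :=
      fun k => C k * d k * x k.1 / (Tstar * x k.1 - Tlow k.1)
    -- (τ*, f*, T*) is feasible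
    ((∀ k : Σ i : Fin N, Fin (M i),
        C k * d k ≤ (Tstar - Tlow k.1 / x k.1) * fstar k) ∧
      (∑ k, fstar k ≤ F) ∧ (∀ k, 0 ≤ fstar k) ∧ Tbar ≤ Tstar) ∧
    -- and optimal
    (∀ (τ : Fin N → ℝ) (f : (Σ i : Fin N, Fin (M i)) → ℝ) (T : ℝ),
      (∀ k : Σ i : Fin N, Fin (M i), C k * d k ≤ (T - τ k.1 / x k.1) * f k) →
      (∑ k, f k ≤ F) → (∀ i, Tlow i ≤ τ i) → (∀ k, 0 ≤ f k) → Tbar ≤ T →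
      ω * Tstar + (1 - ω) * ∑ k : Σ i : Fin N, Fin (M i), p k * Tlow k.1 ≤
        ω * T + (1 - ω) * ∑ k : Σ i : Fin N, Fin (M i), p k * τ k.1) := by
  intro Tstar fstar
  have hTt' : ∀ i, 0 < Tt * x i - Tlow i := fun i => sub_pos.2 (hTt i)
  have hTstar : ∀ i, 0 < Tstar * x i - Tlow i := fun i =>
    (hTt' i).trans_le (by nlinarith [hx i, le_max_right Tbar Tt])
  have hnum : ∀ k : Σ i : Fin N, Fin (M i), 0 < C k * d k * x k.1 := fun k =>
    mul_pos (mul_pos (hC k) (hd k)) (hx k.1)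
  refine ⟨⟨fun k => ?_, ?_, fun k => (div_pos (hnum k) (hTstar k.1)).le, le_max_left _ _⟩, ?_⟩
  · exact (sub_div_mul_div_sub_mul_eq (hx k.1).ne' (hTstar k.1).ne').ge
  · exact hTteq ▸ sum_div_sub_antitone (fun k => (hnum k).le) (fun k => hx k.1)
      (fun k => hTt' k.1) (le_max_right _ _)
  · intro τ f T hcon hsum hτ hf hT
    have hTtT : Tt ≤ T := le_of_sum_le_of_le_sub_mul hnum (fun k => hx k.1) (fun k => hTt' k.1)
      hF hTteq hf hsum fun k => mul_le_sub_mul_of_le_sub_div_mul (hx k.1) (hτ k.1) (hf k) (hcon k)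
    exact add_le_add (mul_le_mul_of_nonneg_left (max_le hT hTtT) hω0.le)
      (mul_le_mul_of_nonneg_left (sum_le_sum fun k _ => mul_le_mul_of_nonneg_left (hτ k.1) (hp k))
        (sub_nonneg.2 hω1))

/-- Closed-form optimum of the subproblem min ωT + (1−ω)Σ_{ij} p_{ij}τ_i subject
to τ_i/x_i + C_{ij}d_{ij}/f_{ij} ≤ T, Σ f ≤ F, τ_i ≥ T_i, f ≥ 0, T ≥ T̄ (for
fixed d, x, p): the optimum is τ_i* = T_i, f_{ij}* = C_{ij}d_{ij}x_i/(T*x_i − T_i),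
T* = max{T̄, T̃}, where T̃ solves Σ_{ij} C_{ij}d_{ij}x_i/(T̃x_i − T_i) = F.
The constraint τ_i/x_i + C_{ij}d_{ij}/f_{ij} ≤ T is written in the equivalent
product form C_{ij}d_{ij} ≤ (T − τ_i/x_i)·f_{ij} (valid for f_{ij} ≥ 0). -/
theorem stmt_15 (N : ℕ) (M : Fin N → ℕ) (ω : ℝ) (hω0 : 0 < ω) (hω1 : ω ≤ 1)
    (p C d : (Σ i : Fin N, Fin (M i)) → ℝ) (x Tlow : Fin N → ℝ)
    (Tbar F Tt : ℝ) (hp : ∀ k, 0 ≤ p k) (hC : ∀ k, 0 < C k) (hd : ∀ k, 0 < d k)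
    (hx : ∀ i, 0 < x i) (hTlow : ∀ i, 0 < Tlow i) (hF : 0 < F)
    (hTt : ∀ i, Tlow i < Tt * x i)
    (hTteq : ∑ k : Σ i : Fin N, Fin (M i),
      C k * d k * x k.1 / (Tt * x k.1 - Tlow k.1) = F) :
    let Tstar : ℝ := max Tbar Tt
    let fstar : (Σ i : Fin N, Fin (M i)) → ℝ :=
      fun k => C k * d k * x k.1 / (Tstar * x k.1 - Tlow k.1)
    -- (τ*, f*, T*) is feasible
    ((∀ k : Σ i : Fin N, Fin (M i),
        C k * d k ≤ (Tstar - Tlow k.1 / x k.1) * fstar k) ∧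
      (∑ k, fstar k ≤ F) ∧ (∀ k, 0 ≤ fstar k) ∧ Tbar ≤ Tstar) ∧
    -- and optimal
    (∀ (τ : Fin N → ℝ) (f : (Σ i : Fin N, Fin (M i)) → ℝ) (T : ℝ),
      (∀ k : Σ i : Fin N, Fin (M i), C k * d k ≤ (T - τ k.1 / x k.1) * f k) →
      (∑ k, f k ≤ F) → (∀ i, Tlow i ≤ τ i) → (∀ k, 0 ≤ f k) → Tbar ≤ T →
      ω * Tstar + (1 - ω) * ∑ k : Σ i : Fin N, Fin (M i), p k * Tlow k.1 ≤
        ω * T + (1 - ω) * ∑ k : Σ i : Fin N, Fin (M i), p k * τ k.1) :=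
  stmt_15_general N M ω hω0 hω1 p C d x Tlow Tbar F Tt hp hC hd hx hF hTt hTteq
end
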